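/- Let G have a positive-negative spanning tree T and suppose every bipartition (V₁,V₂) of nodes has a balancing set whose weight matrices have trivially intersecting null space (no non-trivial balancing set exists). Then the null space of the matrix-valued Laplacian L is trivial: null(L) = {0}, so the dynamics ẋ = −Lx converges to the origin for all initial conditions. -/

import Mathlib

/-!
With `sᵢₖ Aᵢₖ ⪰ 0` the weight of edge `ik` made positive semidefinite,
`2 xᵀ L x = ∑ᵢₖ (xᵢ - sᵢₖ xₖ)ᵀ (sᵢₖ Aᵢₖ) (xᵢ - sᵢₖ xₖ)`, so `L` is positive semidefinite and
`xᵀ L x = 0` forces `Aᵢₖ (xᵢ - sᵢₖ xₖ) = 0` on every edge. Along the definite edges of the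
spanning tree this gives `xᵢ = εᵢ ξ` with `εᵢ = ±1`. For the bipartition `{εᵢ = 1}`, every edge
of its balancing set has either `εᵢ - sᵢₖ εₖ = ±2` or a weight that is both positive and negative
semidefinite, hence zero; either way `Aᵢₖ ξ = 0`, so `ξ = 0` and `x = 0`.
The quadratic form of `L` is therefore bounded below by `μ ‖x‖²` for some `μ > 0`, and Grönwall's
inequality gives `‖x(t)‖² ≤ e^{-2μt} ‖x(0)‖²` along `ẋ = -L x`.
-/

open Matrix Function

lemma Matrix.PosSemidef.eq_zero_of_neg {m : Type*} [Fintype m] {M : Matrix m m ℝ}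
    (hM : M.PosSemidef) (hM' : (-M).PosSemidef) : M = 0 :=
  open scoped MatrixOrder in
  le_antisymm (by rwa [le_iff, zero_sub]) (nonneg_iff_posSemidef.mpr hM)

lemma Matrix.eq_zero_of_mulVec_eq_zero_of_posDef_or_neg {m : Type*} [Fintype m]
    {M : Matrix m m ℝ} (hM : M.PosDef ∨ (-M).PosDef) {v : m → ℝ} (hv : M *ᵥ v = 0) : v = 0 := by
  by_contra hne
  rcases hM with hM | hM
  · simpa [hv] using hM.dotProduct_mulVec_pos hne
  · simpa [neg_mulVec, hv] using hM.dotProduct_mulVec_pos hne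

lemma Matrix.dotProduct_mulVec_sub_add_dotProduct_mulVec_sub {m : Type*} [Fintype m]
    {M : Matrix m m ℝ} (hM : Mᵀ = M) {σ : ℝ} (hσ : σ * σ = 1) (u v : m → ℝ) :
    u ⬝ᵥ M *ᵥ (σ • u - v) + v ⬝ᵥ M *ᵥ (σ • v - u) =
      (u - σ • v) ⬝ᵥ (σ • M) *ᵥ (u - σ • v) := by
  have hvu : v ⬝ᵥ M *ᵥ u = u ⬝ᵥ M *ᵥ v := by
    rw [dotProduct_mulVec, ← mulVec_transpose, hM, dotProduct_comm]
  simp only [mulVec_sub, mulVec_smul, smul_mulVec, sub_dotProduct, dotProduct_sub,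
    smul_dotProduct, dotProduct_smul, smul_eq_mul, hvu]
  linear_combination (2 * (u ⬝ᵥ M *ᵥ v) - σ * (v ⬝ᵥ M *ᵥ v)) * hσ

section SignedWeight

def IsSignedWeight {m : Type*} (σ : ℝ) (M : Matrix m m ℝ) : Prop :=
  (σ = 1 ∧ M.PosSemidef) ∨ (σ = -1 ∧ (-M).PosSemidef)

variable {m : Type*} {σ : ℝ} {M : Matrix m m ℝ}

namespace IsSignedWeight

lemma sign (h : IsSignedWeight σ M) : σ = 1 ∨ σ = -1 :=
  h.imp And.left And.left

lemma mul_self_eq_one (h : IsSignedWeight σ M) : σ * σ = 1 := by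
  rcases h.sign with rfl | rfl <;> norm_num

lemma posSemidef_smul (h : IsSignedWeight σ M) : (σ • M).PosSemidef := by
  rcases h with ⟨rfl, hM⟩ | ⟨rfl, hM⟩
  · rwa [one_smul]
  · rwa [neg_one_smul]

lemma transpose_eq (h : IsSignedWeight σ M) : Mᵀ = M := by
  have hσ : σ ≠ 0 := by rcases h.sign with rfl | rfl <;> norm_num
  have hsymm : (σ • M)ᵀ = σ • M := by
    simpa [IsHermitian, conjTranspose_eq_transpose_of_trivial] using h.posSemidef_smul.1
  rw [transpose_smul] at hsymm
  exact smul_right_injective _ hσ hsymm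

lemma mulVec_eq_zero_of_balancing [Fintype m] (h : IsSignedWeight σ M) {ε ε' : ℝ}
    (hε' : ε' ≠ 0) {ξ : m → ℝ}
    (hker : M *ᵥ ((ε - σ * ε') • ξ) = 0)
    (hbal : (ε = ε' ∧ (-M).PosSemidef) ∨ (ε ≠ ε' ∧ M.PosSemidef)) : M *ᵥ ξ = 0 := by
  by_cases hc : ε - σ * ε' = 0
  · suffices M = 0 by rw [this, zero_mulVec]
    rcases h with ⟨rfl, hM⟩ | ⟨rfl, hM⟩
    · have hεε : ε = ε' := by linarith
      exact hM.eq_zero_of_neg (hbal.resolve_right fun h => h.1 hεε).2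
    · have hεε : ε ≠ ε' := fun h => hε' (by linarith)
      have hM' : M.PosSemidef := (hbal.resolve_left fun h => hεε h.1).2
      exact neg_eq_zero.mp (hM.eq_zero_of_neg (by rwa [neg_neg]))
  · rw [mulVec_smul, smul_eq_zero] at hker
    exact hker.resolve_left hc

end IsSignedWeight

end SignedWeight

lemma exists_sign_smul_of_reflTransGen {V W : Type*} [AddCommGroup W] [Module ℝ W]
    {R : V → V → Prop} {y : V → W}
    (hR : ∀ i j, R i j → ∃ σ : ℝ, (σ = 1 ∨ σ = -1) ∧ y i = σ • y j) {i j : V}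
    (h : Relation.ReflTransGen R i j) : ∃ ε : ℝ, (ε = 1 ∨ ε = -1) ∧ y i = ε • y j := by
  induction h with
  | refl => exact ⟨1, .inl rfl, (one_smul _ _).symm⟩
  | tail _ hjk ih =>
    obtain ⟨ε, hε, hij⟩ := ih
    obtain ⟨σ, hσ, hjk⟩ := hR _ _ hjk
    refine ⟨ε * σ, ?_, by rw [hij, hjk, smul_smul]⟩
    rcases hε with rfl | rfl <;> rcases hσ with rfl | rfl <;> norm_num

section SignedLaplacian

variable {V m : Type*} [Fintype V] [DecidableEq V] [Fintype m]

def signedLaplacian (s : V → V → ℝ) (A : V → V → Matrix m m ℝ) :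
    Matrix (V × m) (V × m) ℝ :=
  Matrix.of fun p q =>
    if p.1 = q.1 then (∑ k, s p.1 k • A p.1 k) p.2 q.2 else -(A p.1 q.1 p.2 q.2)

variable {s : V → V → ℝ} {A : V → V → Matrix m m ℝ}

lemma signedLaplacian_mulVec_apply (hA : ∀ i, A i i = 0) (x : V × m → ℝ) (i : V) (a : m) :
    (signedLaplacian s A *ᵥ x) (i, a) = ∑ k, (A i k *ᵥ (s i k • curry x i - curry x k)) a := by
  have hL : ∀ j b, signedLaplacian s A (i, a) (j, b) =
      (if i = j then ∑ k, s i k * A i k a b else 0) - A i j a b := by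
    intro j b
    by_cases h : i = j
    · subst h; simp [signedLaplacian, Matrix.sum_apply, hA]
    · simp [signedLaplacian, h]
  simp only [mulVec, dotProduct, Fintype.sum_prod_type, hL, sub_mul, ite_mul, zero_mul,
    Finset.sum_sub_distrib, Finset.sum_mul,
    Pi.sub_apply, Pi.smul_apply, smul_eq_mul, mul_sub, curry]
  congr 1
  rw [Finset.sum_comm]
  simp only [Finset.sum_ite_eq, Finset.mem_univ, if_true]
  rw [Finset.sum_comm]
  exact Finset.sum_congr rfl fun k _ => Finset.sum_congr rfl fun b _ => by ring

lemma dotProduct_signedLaplacian_mulVec (hA : ∀ i, A i i = 0) (x : V × m → ℝ) :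
    x ⬝ᵥ signedLaplacian s A *ᵥ x =
      ∑ i, ∑ k, curry x i ⬝ᵥ A i k *ᵥ (s i k • curry x i - curry x k) := by
  simp only [dotProduct, Fintype.sum_prod_type, signedLaplacian_mulVec_apply hA, Finset.mul_sum]
  exact Finset.sum_congr rfl fun i _ => Finset.sum_comm

end SignedLaplacian

section SignedGraph

variable {V m : Type*} {E : V → V → Prop} {s : V → V → ℝ} {A : V → V → Matrix m m ℝ}

lemma posSemidef_smul_of_isSignedWeight (hA0 : ∀ i j, ¬E i j → A i j = 0)
    (hw : ∀ i j, E i j → IsSignedWeight (s i j) (A i j)) (i k : V) :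
    (s i k • A i k).PosSemidef := by
  by_cases hE : E i k
  · exact (hw i k hE).posSemidef_smul
  · rw [hA0 i k hE, smul_zero]
    exact .zero

variable [Fintype V] [DecidableEq V] [Fintype m]

lemma two_mul_dotProduct_signedLaplacian_mulVec (hEirr : ∀ i, ¬E i i)
    (hA0 : ∀ i j, ¬E i j → A i j = 0) (hw : ∀ i j, E i j → IsSignedWeight (s i j) (A i j))
    (hAsymm : ∀ i j, A i j = A j i) (hssymm : ∀ i j, s i j = s j i) (x : V × m → ℝ) :
    2 * (x ⬝ᵥ signedLaplacian s A *ᵥ x) = ∑ i, ∑ k,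
      (curry x i - s i k • curry x k) ⬝ᵥ (s i k • A i k) *ᵥ (curry x i - s i k • curry x k) := by
  rw [dotProduct_signedLaplacian_mulVec fun i => hA0 i i (hEirr i), two_mul]
  nth_rewrite 2 [Finset.sum_comm]
  rw [← Finset.sum_add_distrib]
  refine Finset.sum_congr rfl fun i _ => ?_
  rw [← Finset.sum_add_distrib]
  refine Finset.sum_congr rfl fun k _ => ?_
  rw [← hAsymm i k, ← hssymm i k]
  by_cases hE : E i k
  · exact dotProduct_mulVec_sub_add_dotProduct_mulVec_sub (hw i k hE).transpose_eq
      (hw i k hE).mul_self_eq_one _ _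
  · simp [hA0 i k hE]

lemma dotProduct_signedLaplacian_mulVec_nonneg (hEirr : ∀ i, ¬E i i)
    (hA0 : ∀ i j, ¬E i j → A i j = 0) (hw : ∀ i j, E i j → IsSignedWeight (s i j) (A i j))
    (hAsymm : ∀ i j, A i j = A j i) (hssymm : ∀ i j, s i j = s j i) (x : V × m → ℝ) :
    0 ≤ x ⬝ᵥ signedLaplacian s A *ᵥ x := by
  have h := two_mul_dotProduct_signedLaplacian_mulVec hEirr hA0 hw hAsymm hssymm x
  have : 0 ≤ 2 * (x ⬝ᵥ signedLaplacian s A *ᵥ x) := h ▸ Finset.sum_nonneg fun i _ =>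
    Finset.sum_nonneg fun k _ => by
      simpa only [star_trivial] using
        (posSemidef_smul_of_isSignedWeight hA0 hw i k).dotProduct_mulVec_nonneg _
  linarith

lemma mulVec_sub_smul_eq_zero_of_dotProduct_signedLaplacian_mulVec_eq_zero
    (hEirr : ∀ i, ¬E i i) (hA0 : ∀ i j, ¬E i j → A i j = 0)
    (hw : ∀ i j, E i j → IsSignedWeight (s i j) (A i j))
    (hAsymm : ∀ i j, A i j = A j i) (hssymm : ∀ i j, s i j = s j i) {x : V × m → ℝ}
    (hx : x ⬝ᵥ signedLaplacian s A *ᵥ x = 0) (i k : V) :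
    A i k *ᵥ (curry x i - s i k • curry x k) = 0 := by
  have hpsd := posSemidef_smul_of_isSignedWeight hA0 hw
  have hnonneg : ∀ i k, 0 ≤ (curry x i - s i k • curry x k) ⬝ᵥ (s i k • A i k) *ᵥ
      (curry x i - s i k • curry x k) := fun i k => by
    simpa only [star_trivial] using (hpsd i k).dotProduct_mulVec_nonneg _
  have hsum := two_mul_dotProduct_signedLaplacian_mulVec hEirr hA0 hw hAsymm hssymm x
  rw [hx, mul_zero, eq_comm, Finset.sum_eq_zero_iff_of_nonneg fun i _ =>
    Finset.sum_nonneg fun k _ => hnonneg i k] at hsum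
  have hterm := (Finset.sum_eq_zero_iff_of_nonneg fun k _ => hnonneg i k).mp
    (hsum i (Finset.mem_univ i)) k (Finset.mem_univ k)
  have hker := ((hpsd i k).dotProduct_mulVec_zero_iff _).mp (by rwa [star_trivial])
  by_cases hE : E i k
  · rw [smul_mulVec, smul_eq_zero] at hker
    exact hker.resolve_left fun h => by simpa [h] using (hw i k hE).mul_self_eq_one
  · simp [hA0 i k hE]

theorem eq_zero_of_dotProduct_signedLaplacian_mulVec_eq_zero (hEirr : ∀ i, ¬E i i)
    (hA0 : ∀ i j, ¬E i j → A i j = 0) (hw : ∀ i j, E i j → IsSignedWeight (s i j) (A i j))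
    (hAsymm : ∀ i j, A i j = A j i) (hssymm : ∀ i j, s i j = s j i)
    {T : V → V → Prop} (hTE : ∀ i j, T i j → E i j)
    (hTdef : ∀ i j, T i j → (A i j).PosDef ∨ (-(A i j)).PosDef)
    (hTconn : ∀ i j, Relation.ReflTransGen T i j)
    (hnoNBS : ∀ P : V → Bool, ∀ ξ : m → ℝ,
      (∀ l k, E l k →
        ((P l = P k ∧ (-(A l k)).PosSemidef) ∨ (P l ≠ P k ∧ (A l k).PosSemidef)) →
        A l k *ᵥ ξ = 0) → ξ = 0)
    {x : V × m → ℝ} (hx : x ⬝ᵥ signedLaplacian s A *ᵥ x = 0) : x = 0 := by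
  have hedge := mulVec_sub_smul_eq_zero_of_dotProduct_signedLaplacian_mulVec_eq_zero
    hEirr hA0 hw hAsymm hssymm hx
  have hsign (i j : V) : ∃ ε : ℝ, (ε = 1 ∨ ε = -1) ∧ curry x i = ε • curry x j :=
    exists_sign_smul_of_reflTransGen (fun i j hT => ⟨s i j, (hw i j (hTE i j hT)).sign,
      sub_eq_zero.mp (eq_zero_of_mulVec_eq_zero_of_posDef_or_neg (hTdef i j hT) (hedge i j))⟩)
      (hTconn i j)
  funext ⟨j, a⟩
  choose ε hε hεx using fun i => hsign i j
  have hε0 (i : V) : ε i ≠ 0 := by rcases hε i with h | h <;> norm_num [h]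
  have hP (l k : V) : decide (ε l = 1) = decide (ε k = 1) ↔ ε l = ε k := by
    rcases hε l with h | h <;> rcases hε k with h' | h' <;> norm_num [h, h']
  suffices curry x j = 0 from congr_fun this a
  refine hnoNBS (fun i => decide (ε i = 1)) _ fun l k hE hbal => ?_
  have hker : A l k *ᵥ ((ε l - s l k * ε k) • curry x j) = 0 := by
    rw [sub_smul, mul_smul, ← hεx, ← hεx]
    exact hedge l k
  exact (hw l k hE).mulVec_eq_zero_of_balancing (hε0 k) hker
    (by simpa only [ne_eq, hP] using hbal)

end SignedGraph

section Decay

open Filter Topology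

variable {ι : Type*} [Fintype ι]

lemma Matrix.exists_pos_mul_dotProduct_self_le (M : Matrix ι ι ℝ)
    (hM : ∀ v ≠ 0, 0 < v ⬝ᵥ M *ᵥ v) : ∃ μ > 0, ∀ v, μ * (v ⬝ᵥ v) ≤ v ⬝ᵥ M *ᵥ v := by
  cases isEmpty_or_nonempty ι
  · exact ⟨1, one_pos, fun v => by simp [Subsingleton.elim v 0]⟩
  have hpos (v : ι → ℝ) (hv : v ≠ 0) : 0 < v ⬝ᵥ v :=
    (Finset.sum_nonneg fun i _ => mul_self_nonneg (v i)).lt_of_ne'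
      (dotProduct_self_eq_zero.not.mpr hv)
  -- the Rayleigh quotient is invariant under scaling, so its minimum on the unit sphere works
  set f : (ι → ℝ) → ℝ := fun v => (v ⬝ᵥ M *ᵥ v) / (v ⬝ᵥ v)
  have hf : ContinuousOn f (Metric.sphere 0 1) := by
    refine ContinuousOn.div (by fun_prop) (by fun_prop) fun v hv => (hpos v ?_).ne'
    exact ne_zero_of_mem_unit_sphere ⟨v, hv⟩
  obtain ⟨v₀, hv₀, hmin⟩ := (isCompact_sphere (0 : ι → ℝ) 1).exists_isMinOn
    (NormedSpace.sphere_nonempty.mpr zero_le_one) hf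
  have hv₀0 : v₀ ≠ 0 := ne_zero_of_mem_unit_sphere ⟨v₀, hv₀⟩
  refine ⟨f v₀, div_pos (hM v₀ hv₀0) (hpos v₀ hv₀0), fun v => ?_⟩
  rcases eq_or_ne v 0 with rfl | hv
  · rw [zero_dotProduct, zero_dotProduct, mul_zero]
  have hscale : f (‖v‖⁻¹ • v) = f v := by
    have : ‖v‖⁻¹ ≠ 0 := inv_ne_zero (norm_ne_zero_iff.mpr hv)
    simp only [f, mulVec_smul, dotProduct_smul, smul_dotProduct, smul_eq_mul]
    field_simp
  have hle : f v₀ ≤ f v := hscale ▸ hmin (by simp [norm_smul, norm_ne_zero_iff.mpr hv])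
  rwa [le_div_iff₀ (hpos v hv)] at hle

lemma hasDerivAt_dotProduct_self {x : ℝ → ι → ℝ} {x' : ι → ℝ} {t : ℝ}
    (hx : HasDerivAt x x' t) : HasDerivAt (fun t => x t ⬝ᵥ x t) (2 * (x t ⬝ᵥ x')) t := by
  have hcoord (i : ι) : HasDerivAt (fun t => x t i) (x' i) t := hasDerivAt_pi.mp hx i
  refine (HasDerivAt.fun_sum fun i _ => (hcoord i).mul (hcoord i)).congr_deriv ?_
  rw [dotProduct, Finset.mul_sum]
  exact Finset.sum_congr rfl fun i _ => by ring

lemma le_exp_mul_of_hasDerivAt_le {g g' : ℝ → ℝ} {c : ℝ} (hg : ∀ t, HasDerivAt g (g' t) t)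
    (hle : ∀ t, g' t ≤ c * g t) {t : ℝ} (ht : 0 ≤ t) : g t ≤ g 0 * Real.exp (c * t) := by
  have := le_gronwallBound_of_liminf_deriv_right_le (ε := 0)
    (fun s _ => (hg s).continuousAt.continuousWithinAt)
    (fun s _ r hr => (hg s).hasDerivWithinAt.liminf_right_slope_le hr) le_rfl
    (fun s _ => by simpa using hle s) t ⟨ht, le_rfl⟩
  simpa [gronwallBound_ε0] using this

lemma norm_le_sqrt_dotProduct_self (v : ι → ℝ) : ‖v‖ ≤ √(v ⬝ᵥ v) := by
  refine (pi_norm_le_iff_of_nonneg (Real.sqrt_nonneg _)).mpr fun i => ?_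
  rw [Real.norm_eq_abs]
  refine Real.abs_le_sqrt ?_
  rw [sq]
  exact Finset.single_le_sum (f := fun j => v j * v j) (fun j _ => mul_self_nonneg _)
    (Finset.mem_univ i)

theorem tendsto_zero_of_hasDerivAt_neg_mulVec (M : Matrix ι ι ℝ)
    (hM : ∀ v ≠ 0, 0 < v ⬝ᵥ M *ᵥ v) (x : ℝ → ι → ℝ)
    (hx : ∀ t, HasDerivAt x (-(M *ᵥ x t)) t) : Tendsto x atTop (𝓝 0) := by
  obtain ⟨μ, hμ, hμM⟩ := M.exists_pos_mul_dotProduct_self_le hM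
  have hg (t : ℝ) : HasDerivAt (fun t => x t ⬝ᵥ x t) (-2 * (x t ⬝ᵥ M *ᵥ x t)) t := by
    simpa using hasDerivAt_dotProduct_self (hx t)
  have hbound (t : ℝ) (ht : 0 ≤ t) : x t ⬝ᵥ x t ≤ x 0 ⬝ᵥ x 0 * Real.exp (-2 * μ * t) :=
    le_exp_mul_of_hasDerivAt_le hg (fun t => by nlinarith [hμM (x t)]) ht
  have hexp : Tendsto (fun t => x 0 ⬝ᵥ x 0 * Real.exp (-2 * μ * t)) atTop (𝓝 0) := by
    simpa using (Real.tendsto_exp_atBot.comp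
      (tendsto_id.const_mul_atTop_of_neg (by linarith : -2 * μ < 0))).const_mul (x 0 ⬝ᵥ x 0)
  have hsq : Tendsto (fun t => x t ⬝ᵥ x t) atTop (𝓝 0) :=
    squeeze_zero' (.of_forall fun t => Finset.sum_nonneg fun i _ => mul_self_nonneg _)
      ((eventually_ge_atTop 0).mono hbound) hexp
  exact squeeze_zero_norm (fun t => norm_le_sqrt_dotProduct_self (x t))
    (by simpa using hsq.sqrt)

end Decay

theorem no_nbs_implies_trivial_consensus_general {n d : ℕ}
    (E : Fin n → Fin n → Prop)
    (hEirr : ∀ i, ¬ E i i)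
    (A : Fin n → Fin n → Matrix (Fin d) (Fin d) ℝ)
    (hAsymm : ∀ i j, A i j = A j i)
    (hA0 : ∀ i j, ¬ E i j → A i j = 0)
    (s : Fin n → Fin n → ℝ) (hssymm : ∀ i j, s i j = s j i)
    (hs : ∀ i j, E i j →
      (s i j = 1 ∧ (A i j).PosSemidef) ∨ (s i j = -1 ∧ (-(A i j)).PosSemidef))
    -- the positive-negative spanning tree
    (T : Fin n → Fin n → Prop)
    (hTE : ∀ i j, T i j → E i j)
    (hTdef : ∀ i j, T i j → (A i j).PosDef ∨ (-(A i j)).PosDef)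
    (hTconn : ∀ p q : Fin n, Relation.ReflTransGen T p q)
    (L : Matrix (Fin n × Fin d) (Fin n × Fin d) ℝ)
    (hL : L = Matrix.of fun p q =>
      if p.1 = q.1 then (∑ k, s p.1 k • A p.1 k) p.2 q.2 else -(A p.1 q.1 p.2 q.2))
    -- no non-trivial balancing set: for every bipartition, the weight matrices of its
    -- balancing set have trivially intersecting null spaces
    (hnoNBS : ∀ P : Fin n → Bool, ∀ ξ : Fin d → ℝ,
      (∀ l m, E l m →
        ((P l = P m ∧ (-(A l m)).PosSemidef) ∨ (P l ≠ P m ∧ (A l m).PosSemidef)) →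
        (A l m).mulVec ξ = 0) → ξ = 0) :
    (∀ x : Fin n × Fin d → ℝ, L.mulVec x = 0 → x = 0) ∧
    (∀ x : ℝ → (Fin n × Fin d → ℝ),
      (∀ t : ℝ, HasDerivAt x (-(L.mulVec (x t))) t) →
      Filter.Tendsto x Filter.atTop (nhds 0)) := by
  obtain rfl : L = signedLaplacian s A := hL
  have hker (x : Fin n × Fin d → ℝ) (hx : x ⬝ᵥ signedLaplacian s A *ᵥ x = 0) : x = 0 :=
    eq_zero_of_dotProduct_signedLaplacian_mulVec_eq_zero hEirr hA0 hs hAsymm hssymm hTE hTdef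
      hTconn hnoNBS hx
  refine ⟨fun x hx => hker x (by rw [hx, dotProduct_zero]),
    tendsto_zero_of_hasDerivAt_neg_mulVec _ fun v hv => ?_⟩
  exact (dotProduct_signedLaplacian_mulVec_nonneg hEirr hA0 hs hAsymm hssymm v).lt_of_ne'
    (mt (hker v) hv)

/-- Let `G` have a positive-negative spanning tree `T` and suppose every
bipartition `(V₁,V₂)` of the nodes has a balancing set whose weight matrices have
trivially intersecting null spaces (no non-trivial balancing set exists).  Then the
null space of the matrix-valued Laplacian `L` is trivial, `null(L) = {0}`, and the
dynamics `ẋ = −L x` converges to the origin for every initial condition. -/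
theorem no_nbs_implies_trivial_consensus {n d : ℕ}
    (E : Fin n → Fin n → Prop)
    (hEsymm : ∀ i j, E i j → E j i) (hEirr : ∀ i, ¬ E i i)
    (A : Fin n → Fin n → Matrix (Fin d) (Fin d) ℝ)
    (hAsymm : ∀ i j, A i j = A j i)
    (hA0 : ∀ i j, ¬ E i j → A i j = 0)
    (s : Fin n → Fin n → ℝ) (hssymm : ∀ i j, s i j = s j i)
    (hs : ∀ i j, E i j →
      (s i j = 1 ∧ (A i j).PosSemidef) ∨ (s i j = -1 ∧ (-(A i j)).PosSemidef))
    -- the positive-negative spanning tree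
    (T : Fin n → Fin n → Prop)
    (hTsymm : ∀ i j, T i j → T j i) (hTE : ∀ i j, T i j → E i j)
    (hTdef : ∀ i j, T i j → (A i j).PosDef ∨ (-(A i j)).PosDef)
    (hTconn : ∀ p q : Fin n, Relation.ReflTransGen T p q)
    (L : Matrix (Fin n × Fin d) (Fin n × Fin d) ℝ)
    (hL : L = Matrix.of fun p q =>
      if p.1 = q.1 then (∑ k, s p.1 k • A p.1 k) p.2 q.2 else -(A p.1 q.1 p.2 q.2))
    -- no non-trivial balancing set: for every bipartition, the weight matrices of its
    -- balancing set have trivially intersecting null spaces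
    (hnoNBS : ∀ P : Fin n → Bool, ∀ ξ : Fin d → ℝ,
      (∀ l m, E l m →
        ((P l = P m ∧ (-(A l m)).PosSemidef) ∨ (P l ≠ P m ∧ (A l m).PosSemidef)) →
        (A l m).mulVec ξ = 0) → ξ = 0) :
    (∀ x : Fin n × Fin d → ℝ, L.mulVec x = 0 → x = 0) ∧
    (∀ x : ℝ → (Fin n × Fin d → ℝ),
      (∀ t : ℝ, HasDerivAt x (-(L.mulVec (x t))) t) →
      Filter.Tendsto x Filter.atTop (nhds 0)) :=
  no_nbs_implies_trivial_consensus_general E hEirr A hAsymm hA0 s hssymm hs T hTE hTdef hTconn L hL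
    hnoNBS
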